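/- If integers ĥq, e, s₄, m₄, s₃, m₃ satisfy ĥq = 2·(s₄ + m₄·e) + e and 3·ĥq = 8·(s₃ + m₃·e) + 7·e with 1 ≤ ĥq ≤ 8, e ≥ 1, and s₄, m₄, s₃, m₃ ≥ 0, then (ĥq, e) = (5, 1) or (ĥq, e) = (7, 3). -/

import Mathlib

/-- Since `7 e ≤ 3 q ≤ 24`, only `e ≤ 3` is possible, and for each such `e` the congruence
`3 q ≡ 7 e (mod 8)` leaves a single candidate `q ≤ 8`. -/
theorem eq_of_three_mul_eq_eight_mul_add_seven_mul {q e n : ℤ} (hq : q ≤ 8) (he : 1 ≤ e)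
    (hn : 0 ≤ n) (h : 3 * q = 8 * n + 7 * e) : (q = 5 ∧ e = 1) ∨ (q = 7 ∧ e = 3) := by
  have he3 : e ≤ 3 := by omega
  interval_cases e <;> omega

theorem stmt19_general (q e s3 m3 : ℤ) (h2 : q ≤ 8) (h3 : 1 ≤ e)
    (hs3 : 0 ≤ s3) (hm3 : 0 ≤ m3)
    (heq3 : 3 * q = 8 * (s3 + m3 * e) + 7 * e) :
    (q = 5 ∧ e = 1) ∨ (q = 7 ∧ e = 3) :=
  eq_of_three_mul_eq_eight_mul_add_seven_mul h2 h3
    (add_nonneg hs3 (mul_nonneg hm3 (by omega))) heq3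

theorem stmt19 (q e s4 m4 s3 m3 : ℤ) (h1 : 1 ≤ q) (h2 : q ≤ 8) (h3 : 1 ≤ e)
    (hs4 : 0 ≤ s4) (hm4 : 0 ≤ m4) (hs3 : 0 ≤ s3) (hm3 : 0 ≤ m3)
    (heq4 : q = 2 * (s4 + m4 * e) + e) (heq3 : 3 * q = 8 * (s3 + m3 * e) + 7 * e) :
    (q = 5 ∧ e = 1) ∨ (q = 7 ∧ e = 3) :=
  stmt19_general q e s3 m3 h2 h3 hs3 hm3 heq3
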